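/- Let Ω be a domain in ℝ^N, let t > 1, let r ∈ [1, t], and let (w_m) be a bounded sequence in L^t(Ω) converging almost everywhere on Ω to a function w. Then ∫_Ω | |w_m|^r - |w_m - w|^r - |w|^r |^{t/r} dx → 0 as m → ∞. -/

import Mathlib

/-!
For `r > 0` and `ε > 0` there is `C_ε` with `||u + v|^r - |u|^r| ≤ ε |u|^r + C_ε |v|^r`: split
according to whether `|v|` is small compared with `|u|`. Taking `u = w_m - w`, `v = w` and raising
to the power `t / r` bounds the integrand by `ε |w_m - w|^t + D_ε |w|^t`. The first term has
integral `O(ε)` uniformly in `m`, because `w ∈ L^t` by Fatou; what the integrand exceeds it by is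
dominated by `D_ε |w|^t` and tends to `0` a.e., so dominated convergence finishes the proof.
-/

open MeasureTheory Filter Topology
open scoped ENNReal

theorem add_rpow_le_one_add_rpow_mul_rpow_add {r δ a b : ℝ} (hr : 0 ≤ r) (hδ : 0 < δ)
    (ha : 0 ≤ a) (hb : 0 ≤ b) :
    (a + b) ^ r ≤ (1 + δ) ^ r * a ^ r + (1 + δ⁻¹) ^ r * b ^ r := by
  rcases le_total b (δ * a) with hba | hab
  · have hsum : a + b ≤ (1 + δ) * a := by linarith
    calc (a + b) ^ r ≤ ((1 + δ) * a) ^ r := by gcongr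
      _ = (1 + δ) ^ r * a ^ r := Real.mul_rpow (by positivity) ha
      _ ≤ _ := le_add_of_nonneg_right (by positivity)
  · have hsum : a + b ≤ (1 + δ⁻¹) * b := by
      have : a ≤ δ⁻¹ * b := by rw [inv_mul_eq_div, le_div_iff₀ hδ]; linarith
      linarith
    calc (a + b) ^ r ≤ ((1 + δ⁻¹) * b) ^ r := by gcongr
      _ = (1 + δ⁻¹) ^ r * b ^ r := Real.mul_rpow (by positivity) hb
      _ ≤ _ := le_add_of_nonneg_left (by positivity)

theorem exists_abs_add_rpow_le {r η : ℝ} (hr : 0 < r) (hη : 0 < η) :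
    ∃ C, 0 ≤ C ∧ ∀ u v : ℝ, |u + v| ^ r ≤ (1 + η) * |u| ^ r + C * |v| ^ r := by
  set δ := (1 + η) ^ r⁻¹ - 1
  have hδ : 0 < δ := sub_pos.2 (Real.one_lt_rpow (by linarith) (inv_pos.2 hr))
  have hδr : (1 + δ) ^ r = 1 + η := by
    rw [add_sub_cancel, Real.rpow_inv_rpow (by positivity) hr.ne']
  refine ⟨(1 + δ⁻¹) ^ r, by positivity, fun u v => ?_⟩
  calc |u + v| ^ r ≤ (|u| + |v|) ^ r := by gcongr; exact abs_add_le u v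
    _ ≤ _ := by
      simpa only [hδr] using
        add_rpow_le_one_add_rpow_mul_rpow_add hr.le hδ (abs_nonneg u) (abs_nonneg v)

theorem exists_abs_abs_add_rpow_sub_rpow_le {r ε : ℝ} (hr : 0 < r) (hε : 0 < ε) :
    ∃ C, 0 ≤ C ∧ ∀ u v : ℝ, |(|u + v| ^ r - |u| ^ r)| ≤ ε * |u| ^ r + C * |v| ^ r := by
  set η := min 1 (ε / 2)
  have hη : 0 < η := lt_min one_pos (half_pos hε)
  have hη1 : η ≤ 1 := min_le_left 1 (ε / 2)
  have hηε : η ≤ ε / 2 := min_le_right 1 (ε / 2)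
  obtain ⟨C, hC, hle⟩ := exists_abs_add_rpow_le hr hη
  refine ⟨2 * C, by positivity, fun u v => abs_sub_le_iff.2 ⟨?_, ?_⟩⟩
  all_goals
    have hu : 0 ≤ |u| ^ r := by positivity
    have hCv : 0 ≤ C * |v| ^ r := by positivity
  · nlinarith [hle u v]
  · have hback : |u| ^ r ≤ (1 + η) * |u + v| ^ r + C * |v| ^ r := by
      simpa using hle (u + v) (-v)
    have hηη : η * (1 + η) ≤ ε := by nlinarith
    nlinarith [mul_le_mul_of_nonneg_left (hle u v) hη.le, mul_le_mul_of_nonneg_right hηη hu,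
      mul_le_mul_of_nonneg_right hη1 hCv]

theorem exists_abs_abs_rpow_sub_abs_sub_rpow_sub_abs_rpow_le {r t ε : ℝ} (hr : 0 < r)
    (ht : 0 < t) (hε : 0 < ε) :
    ∃ D, ∀ a b : ℝ,
      |(|a| ^ r - |a - b| ^ r - |b| ^ r)| ^ (t / r) ≤ ε * |a - b| ^ t + D * |b| ^ t := by
  set q := t / r
  have hq : 0 < q := div_pos ht hr
  have hrq : r * q = t := mul_div_cancel₀ t hr.ne'
  set ε₀ := (ε / 2 ^ q) ^ q⁻¹
  have hε₀ : 0 < ε₀ := by positivity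
  have hε₀q : 2 ^ q * ε₀ ^ q = ε := by
    rw [Real.rpow_inv_rpow (by positivity) hq.ne', mul_div_cancel₀ _ (by positivity)]
  obtain ⟨C, hC, hle⟩ := exists_abs_abs_add_rpow_sub_rpow_le hr hε₀
  refine ⟨2 ^ q * (C + 1) ^ q, fun a b => ?_⟩
  have hlin : |(|a| ^ r - |a - b| ^ r - |b| ^ r)| ≤ ε₀ * |a - b| ^ r + (C + 1) * |b| ^ r := by
    have h := hle (a - b) b
    rw [sub_add_cancel] at h
    have hb : 0 ≤ |b| ^ r := by positivity
    rw [abs_le] at h ⊢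
    constructor <;> nlinarith
  have hpow : ∀ c x : ℝ, 0 ≤ c → (c * |x| ^ r) ^ q = c ^ q * |x| ^ t := fun c x hc => by
    rw [Real.mul_rpow hc (by positivity), ← Real.rpow_mul (abs_nonneg x), hrq]
  calc |(|a| ^ r - |a - b| ^ r - |b| ^ r)| ^ q
      ≤ (ε₀ * |a - b| ^ r + (C + 1) * |b| ^ r) ^ q := by gcongr
    _ ≤ 2 ^ q * (ε₀ * |a - b| ^ r) ^ q + 2 ^ q * ((C + 1) * |b| ^ r) ^ q := by
      simpa [one_add_one_eq_two] using
        add_rpow_le_one_add_rpow_mul_rpow_add hq.le one_pos (by positivity) (by positivity)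
    _ = ε * |a - b| ^ t + 2 ^ q * (C + 1) ^ q * |b| ^ t := by
      rw [hpow _ _ hε₀.le, hpow _ _ (by positivity), ← hε₀q]; ring

theorem tendsto_integral_zero_of_le_mul_add {α : Type*} [MeasurableSpace α] {μ : Measure α}
    {F H : ℕ → α → ℝ} {M : ℝ} (hF : ∀ m, AEStronglyMeasurable (F m) μ)
    (hF_nonneg : ∀ m x, 0 ≤ F m x) (hF_lim : ∀ᵐ x ∂μ, Tendsto (F · x) atTop (𝓝 0))
    (hH : ∀ m, Integrable (H m) μ) (hH_nonneg : ∀ m x, 0 ≤ H m x)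
    (hH_le : ∀ m, ∫ x, H m x ∂μ ≤ M)
    (hFH : ∀ ε > 0, ∃ G, Integrable G μ ∧ ∀ m x, F m x ≤ ε * H m x + G x) :
    Tendsto (fun m => ∫ x, F m x ∂μ) atTop (𝓝 0) := by
  refine tendsto_order.2 ⟨fun a ha => .of_forall fun m => ha.trans_le
    (integral_nonneg (hF_nonneg m)), fun δ hδ => ?_⟩
  obtain ⟨ε, hε, hεM⟩ : ∃ ε > 0, ε * M < δ / 2 := by
    have hM : 0 ≤ M := (integral_nonneg (hH_nonneg 0)).trans (hH_le 0)
    refine ⟨δ / (2 * (M + 1)), by positivity, ?_⟩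
    rw [div_mul_eq_mul_div, div_lt_div_iff₀ (by positivity) two_pos]
    nlinarith
  obtain ⟨G, hG, hFG⟩ := hFH ε hε
  -- Dominated convergence applies to the part of `F m` exceeding `ε * H m`, which is below `|G|`.
  set g := fun m x => max (F m x - ε * H m x) 0
  have hg : ∀ m, AEStronglyMeasurable (g m) μ := fun m =>
    ((hF m).sub ((hH m).aestronglyMeasurable.const_mul ε)).sup aestronglyMeasurable_const
  have hg_le : ∀ m, ∀ᵐ x ∂μ, ‖g m x‖ ≤ |G x| := fun m => .of_forall fun x => by
    rw [Real.norm_of_nonneg (le_max_right _ _)]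
    exact max_le (by linarith [hFG m x, le_abs_self (G x)]) (abs_nonneg _)
  have hg_lim : ∀ᵐ x ∂μ, Tendsto (g · x) atTop (𝓝 0) := by
    filter_upwards [hF_lim] with x hx
    refine squeeze_zero (fun m => le_max_right _ _) (fun m => max_le ?_ (hF_nonneg m x)) hx
    linarith [mul_nonneg hε.le (hH_nonneg m x)]
  have hg_int : Tendsto (fun m => ∫ x, g m x ∂μ) atTop (𝓝 0) := by
    simpa using tendsto_integral_of_dominated_convergence _ hg hG.abs hg_le hg_lim
  filter_upwards [hg_int.eventually (gt_mem_nhds (half_pos hδ))] with m hm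
  have hgm : Integrable (g m) μ := hG.abs.mono' (hg m) (hg_le m)
  calc ∫ x, F m x ∂μ ≤ ∫ x, (g m x + ε * H m x) ∂μ := by
        refine integral_mono_of_nonneg (.of_forall (hF_nonneg m)) (hgm.add ((hH m).const_mul ε))
          (.of_forall fun x => ?_)
        linarith [le_max_left (F m x - ε * H m x) 0]
    _ = ∫ x, g m x ∂μ + ε * ∫ x, H m x ∂μ := by
        rw [integral_add hgm ((hH m).const_mul ε), integral_const_mul]
    _ ≤ ∫ x, g m x ∂μ + ε * M := by gcongr; exact hH_le m
    _ < δ := by linarith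

section Lp

variable {α E : Type*} [MeasurableSpace α] [NormedAddCommGroup E] {μ : Measure α} {t : ℝ}

theorem MeasureTheory.MemLp.integrable_norm_rpow_of_ofReal {f : α → E} (ht : 0 < t)
    (hf : MemLp f (ENNReal.ofReal t) μ) : Integrable (fun x => ‖f x‖ ^ t) μ := by
  simpa [ht.le] using hf.integrable_norm_rpow (by simpa using ht) ENNReal.ofReal_ne_top

theorem integral_norm_rpow_eq_lpNorm_rpow {f : α → E} (ht : 0 < t)
    (hf : AEStronglyMeasurable f μ) :
    ∫ x, ‖f x‖ ^ t ∂μ = lpNorm f (ENNReal.ofReal t) μ ^ t := by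
  rw [lpNorm_eq_integral_norm_rpow_toReal (by simpa using ht) ENNReal.ofReal_ne_top hf,
    ENNReal.toReal_ofReal ht.le,
    Real.rpow_inv_rpow (integral_nonneg fun x => by positivity) ht.ne']

theorem integral_norm_sub_rpow_le_of_eLpNorm_le {f g : α → E} {B : ℝ≥0∞} (ht : 1 ≤ t)
    (hB : B ≠ ∞) (hf : AEStronglyMeasurable f μ) (hg : AEStronglyMeasurable g μ)
    (hfB : eLpNorm f (ENNReal.ofReal t) μ ≤ B) (hgB : eLpNorm g (ENNReal.ofReal t) μ ≤ B) :
    ∫ x, ‖f x - g x‖ ^ t ∂μ ≤ (2 * B.toReal) ^ t := by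
  have hlpNorm_le : ∀ h : α → E, AEStronglyMeasurable h μ →
      eLpNorm h (ENNReal.ofReal t) μ ≤ B → lpNorm h (ENNReal.ofReal t) μ ≤ B.toReal :=
    fun h hh hhB => toReal_eLpNorm hh ▸ ENNReal.toReal_mono hB hhB
  calc ∫ x, ‖f x - g x‖ ^ t ∂μ = lpNorm (f - g) (ENNReal.ofReal t) μ ^ t :=
        integral_norm_rpow_eq_lpNorm_rpow (by linarith) (hf.sub hg)
    _ ≤ (lpNorm f (ENNReal.ofReal t) μ + lpNorm g (ENNReal.ofReal t) μ) ^ t := by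
        gcongr
        exacts [lpNorm_nonneg, lpNorm_sub_le ⟨hf, hfB.trans_lt hB.lt_top⟩ (by simpa using ht)]
    _ ≤ (2 * B.toReal) ^ t := by
        gcongr
        · exact add_nonneg lpNorm_nonneg lpNorm_nonneg
        · linarith [hlpNorm_le f hf hfB, hlpNorm_le g hg hgB]

end Lp

theorem brezis_lieb_powers_general (N : ℕ) (Ω : Set (EuclideanSpace ℝ (Fin N)))
    (t r : ℝ) (ht : 1 < t) (hr1 : 1 ≤ r)
    (w : ℕ → EuclideanSpace ℝ (Fin N) → ℝ) (wl : EuclideanSpace ℝ (Fin N) → ℝ)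
    (hmeas : ∀ m, AEStronglyMeasurable (w m) (volume.restrict Ω))
    (hbdd : ∃ C : ℝ, ∀ m,
      eLpNorm (w m) (ENNReal.ofReal t) (volume.restrict Ω) ≤ ENNReal.ofReal C)
    (hae : ∀ᵐ x ∂(volume.restrict Ω), Tendsto (fun m => w m x) atTop (nhds (wl x))) :
    Tendsto (fun m => ∫ x in Ω, |(|w m x| ^ r - |w m x - wl x| ^ r - |wl x| ^ r)| ^ (t / r))
      atTop (nhds 0) := by
  obtain ⟨C, hC⟩ := hbdd
  have ht0 : 0 < t := by linarith
  have hr0 : 0 < r := by linarith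
  have hw : ∀ m, MemLp (w m) (ENNReal.ofReal t) (volume.restrict Ω) := fun m =>
    ⟨hmeas m, (hC m).trans_lt ENNReal.ofReal_lt_top⟩
  have hwl_le := Lp.eLpNorm_le_of_ae_tendsto (.of_forall hC) hmeas hae
  have hwl : MemLp wl (ENNReal.ofReal t) (volume.restrict Ω) :=
    ⟨aestronglyMeasurable_of_tendsto_ae atTop hmeas hae, hwl_le.trans_lt ENNReal.ofReal_lt_top⟩
  have hφ : Continuous fun y : ℝ × ℝ => |(|y.1| ^ r - |y.1 - y.2| ^ r - |y.2| ^ r)| ^ (t / r) := by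
    fun_prop (disch := positivity)
  refine tendsto_integral_zero_of_le_mul_add (H := fun m x => |w m x - wl x| ^ t)
    (M := (2 * (ENNReal.ofReal C).toReal) ^ t)
    (fun m => (hφ.comp_aestronglyMeasurable ((hmeas m).prodMk hwl.1) :))
    (fun m x => by positivity) ?_ (fun m => ((hw m).sub hwl).integrable_norm_rpow_of_ofReal ht0)
    (fun m x => by positivity)
    (fun m => integral_norm_sub_rpow_le_of_eLpNorm_le ht.le ENNReal.ofReal_ne_top (hmeas m)
      hwl.1 (hC m) hwl_le) fun ε hε => ?_
  · filter_upwards [hae] with x hx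
    simpa [Function.comp_def, Real.zero_rpow hr0.ne', Real.zero_rpow (div_pos ht0 hr0).ne'] using
      (hφ.tendsto (wl x, wl x)).comp (hx.prodMk_nhds tendsto_const_nhds)
  · obtain ⟨D, hD⟩ := exists_abs_abs_rpow_sub_abs_sub_rpow_sub_abs_rpow_le hr0 ht0 hε
    exact ⟨fun x => D * |wl x| ^ t, (hwl.integrable_norm_rpow_of_ofReal ht0).const_mul D,
      fun m x => hD _ _⟩

theorem brezis_lieb_powers (N : ℕ) (Ω : Set (EuclideanSpace ℝ (Fin N)))
    (hΩ : MeasurableSet Ω) (t r : ℝ) (ht : 1 < t) (hr1 : 1 ≤ r) (hrt : r ≤ t)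
    (w : ℕ → EuclideanSpace ℝ (Fin N) → ℝ) (wl : EuclideanSpace ℝ (Fin N) → ℝ)
    (hmeas : ∀ m, AEStronglyMeasurable (w m) (volume.restrict Ω))
    (hbdd : ∃ C : ℝ, ∀ m,
      eLpNorm (w m) (ENNReal.ofReal t) (volume.restrict Ω) ≤ ENNReal.ofReal C)
    (hae : ∀ᵐ x ∂(volume.restrict Ω), Tendsto (fun m => w m x) atTop (nhds (wl x))) :
    Tendsto (fun m => ∫ x in Ω, |(|w m x| ^ r - |w m x - wl x| ^ r - |wl x| ^ r)| ^ (t / r))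
      atTop (nhds 0) :=
  brezis_lieb_powers_general N Ω t r ht hr1 w wl hmeas hbdd hae
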